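/- Varadhan-type concentration of the Gaussian mean shift: let u_0 = Σ_{k=1}^N w_k δ_{y_k} with w_k > 0, fix i, set γ > 0, and let V_i(γ) = { x : ‖x-y_j‖² - ‖x-y_i‖² ≥ γ for all j ≠ i }. Then for every x ∈ V_i(γ) and t > 0, ‖m(x,t) - y_i‖ ≤ (Σ_{j≠i} (w_j/w_i) ‖y_j - y_i‖) · e^{-γ/(4t)}, where m(x,t) = (Σ_k w_k e^{-‖x-y_k‖²/(4t)} y_k)/(Σ_k w_k e^{-‖x-y_k‖²/(4t)}). -/

import Mathlib

open Real Set

/-- The Gaussian-weighted barycenter of the weighted points `(w_k, y_k)` at scale `t`. -/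
noncomputable def meanShiftW {d N : ℕ} (w : Fin N → ℝ) (y : Fin N → EuclideanSpace ℝ (Fin d))
    (x : EuclideanSpace ℝ (Fin d)) (t : ℝ) : EuclideanSpace ℝ (Fin d) :=
  (∑ k : Fin N, w k * Real.exp (-‖x - y k‖ ^ 2 / (4 * t)))⁻¹ •
    ∑ k : Fin N, (w k * Real.exp (-‖x - y k‖ ^ 2 / (4 * t))) • y k

/-- The `γ`-Voronoi core of `y i`. -/
def voronoiCore {d N : ℕ} (y : Fin N → EuclideanSpace ℝ (Fin d)) (i : Fin N) (γ : ℝ) :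
    Set (EuclideanSpace ℝ (Fin d)) :=
  {x | ∀ j : Fin N, j ≠ i → ‖x - y j‖ ^ 2 - ‖x - y i‖ ^ 2 ≥ γ}

/-- Varadhan-type concentration of the Gaussian mean shift on the `γ`-Voronoi core. -/
theorem varadhan_concentration_mean_shift (d N : ℕ)
    (w : Fin N → ℝ) (hw : ∀ k, 0 < w k)
    (y : Fin N → EuclideanSpace ℝ (Fin d))
    (hy : Function.Injective y)
    (i : Fin N) (γ : ℝ) (hγ : 0 < γ)
    (x : EuclideanSpace ℝ (Fin d)) (hx : x ∈ voronoiCore y i γ)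
    (t : ℝ) (ht : 0 < t) :
    ‖meanShiftW w y x t - y i‖ ≤
      (∑ j ∈ Finset.univ.erase i, (w j / w i) * ‖y j - y i‖) * Real.exp (-γ / (4 * t)) := by
  set c : Fin N → ℝ := fun k => w k * Real.exp (-‖x - y k‖ ^ 2 / (4 * t)) with hc
  have hcpos : ∀ k, 0 < c k := fun k => mul_pos (hw k) (Real.exp_pos _)
  set S : ℝ := ∑ k, c k with hS
  have hSpos : 0 < S := Finset.sum_pos (fun k _ => (hcpos k)) ⟨i, Finset.mem_univ i⟩
  have hdiff : meanShiftW w y x t - y i = S⁻¹ • ∑ k, c k • (y k - y i) := by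
    have h1 : (∑ k, c k • (y k - y i)) = (∑ k, c k • y k) - S • y i := by
      simp only [smul_sub]
      rw [Finset.sum_sub_distrib, ← Finset.sum_smul]
    rw [h1, smul_sub, smul_smul, inv_mul_cancel₀ hSpos.ne', one_smul]
    rfl
  have hkey : ∀ j, j ≠ i → c j ≤ (w j / w i * Real.exp (-γ / (4 * t))) * c i := by
    intro j hj
    have hv := hx j hj
    have h4t : 0 < 4 * t := by linarith
    have hexp : Real.exp (-‖x - y j‖ ^ 2 / (4 * t)) ≤
        Real.exp (-γ / (4 * t)) * Real.exp (-‖x - y i‖ ^ 2 / (4 * t)) := by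
      rw [← Real.exp_add]
      apply Real.exp_le_exp.mpr
      rw [← add_div, div_le_div_iff₀ h4t h4t]
      nlinarith
    calc c j = w j * Real.exp (-‖x - y j‖ ^ 2 / (4 * t)) := rfl
      _ ≤ w j * (Real.exp (-γ / (4 * t)) * Real.exp (-‖x - y i‖ ^ 2 / (4 * t))) :=
          mul_le_mul_of_nonneg_left hexp (hw j).le
      _ = (w j / w i * Real.exp (-γ / (4 * t))) * c i := by
          show _ = w j / w i * Real.exp (-γ / (4 * t)) * (w i * Real.exp (-‖x - y i‖ ^ 2 / (4 * t)))
          rw [div_mul_eq_mul_div, div_mul_eq_mul_div, eq_div_iff (hw i).ne']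
          ring
  rw [hdiff, norm_smul, norm_inv, Real.norm_of_nonneg hSpos.le]
  have hb1 : ‖∑ k, c k • (y k - y i)‖ ≤ ∑ j ∈ Finset.univ.erase i, c j * ‖y j - y i‖ := by
    calc ‖∑ k, c k • (y k - y i)‖ = ‖∑ j ∈ Finset.univ.erase i, c j • (y j - y i)‖ := by
          rw [← Finset.sum_erase]
          simp
      _ ≤ ∑ j ∈ Finset.univ.erase i, ‖c j • (y j - y i)‖ := norm_sum_le _ _
      _ = ∑ j ∈ Finset.univ.erase i, c j * ‖y j - y i‖ := by
          apply Finset.sum_congr rfl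
          intro j _
          rw [norm_smul, Real.norm_of_nonneg (hcpos j).le]
  have hb2 : ∑ j ∈ Finset.univ.erase i, c j * ‖y j - y i‖ ≤
      ((∑ j ∈ Finset.univ.erase i, (w j / w i) * ‖y j - y i‖) * Real.exp (-γ / (4 * t))) * c i := by
    rw [Finset.sum_mul, Finset.sum_mul]
    apply Finset.sum_le_sum
    intro j hj
    have := hkey j (Finset.ne_of_mem_erase hj)
    have hn : (0:ℝ) ≤ ‖y j - y i‖ := norm_nonneg _
    nlinarith [hcpos j, hcpos i]
  have hSi : c i ≤ S := Finset.single_le_sum (fun k _ => (hcpos k).le) (Finset.mem_univ i)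
  have hrhsnn : 0 ≤ (∑ j ∈ Finset.univ.erase i, (w j / w i) * ‖y j - y i‖) * Real.exp (-γ / (4 * t)) := by
    apply mul_nonneg _ (Real.exp_pos _).le
    apply Finset.sum_nonneg
    intro j _
    exact mul_nonneg (div_nonneg (hw j).le (hw i).le) (norm_nonneg _)
  calc S⁻¹ * ‖∑ k, c k • (y k - y i)‖ ≤ S⁻¹ * (((∑ j ∈ Finset.univ.erase i, (w j / w i) * ‖y j - y i‖) * Real.exp (-γ / (4 * t))) * c i) := by
        apply mul_le_mul_of_nonneg_left (le_trans hb1 hb2) (inv_nonneg.mpr hSpos.le)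
    _ ≤ _ := by
        rw [mul_comm (S⁻¹) _, mul_assoc]
        have h1 : c i * S⁻¹ ≤ 1 := by
          rw [← div_eq_mul_inv]
          exact div_le_one_of_le₀ hSi hSpos.le
        have h2 : 0 ≤ c i * S⁻¹ := mul_nonneg (hcpos i).le (inv_nonneg.mpr hSpos.le)
        nlinarith [hrhsnn]
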